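/- arXiv:2301.09206 — 5 statements merged into one kernel-verified Lean document; each statement's English description precedes it below -/
import Mathlib

section
/- Let q be a prime number and let 𝒜, ℬ ⊆ Z_q × Z_q be sets with |𝒜|·|ℬ| ≥ 16·q^{15/4}. Then for every nonzero λ ∈ Z_q there exist (a_1,a_2) ∈ 𝒜 and (b_1,b_2) ∈ ℬ with (a_1−b_1)(a_2−b_2) = λ in Z_q. -/
/-!
Write `q = |F|` and `N` for the number of pairs `(a, b) ∈ A × B` with
`(a₁ - b₁)(a₂ - b₂) = λ`. Detecting the equation with an additive character `ψ` gives
`q N = |A||B| + Σ_{t ≠ 0} Σ_{a,b} ψ(tλ - t z₁z₂)` with `z = a - b`. For `t ≠ 0` the phase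
`ψ(-t z₁z₂)` is itself a Fourier transform on the plane,
`q ψ(-t z₁z₂) = Σ_ξ ψ(ξ₁z₁ + ξ₂z₂ + ξ₁ξ₂/t)`, so the error term becomes
`q⁻¹ Σ_ξ Â(ξ) conj(B̂(ξ)) K(λ, ξ₁ξ₂)` with the Kloosterman sum `K(a, b) = Σ_{t ≠ 0} ψ(at + b/t)`.
Cauchy–Schwarz and Parseval bound it by `max |K(λ, ·)| · q² √(|A||B|)`.

The Kloosterman bound `(q - 1)|K(a, b)|⁴ ≤ 3q⁴` for `a ≠ 0` comes from the fourth moment: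
`K(a, b)²` is the Fourier transform of the points `(t₁ + t₂, 1/t₁ + 1/t₂)`, so Parseval turns
`Σ_{a,b} |K(a, b)|⁴` into `q²` times the number of coincidences among these points, at most `3q²`;
and `K(ca, b/c) = K(a, b)` provides `q - 1` equal terms. Then `(|A||B|)² > 6q⁷` forces `N > 0`.
-/

open Finset
open scoped ComplexConjugate

lemma eq_or_eq_swap_or_add_eq_zero_of_add_eq_add_of_inv_add_inv_eq {K : Type*} [Field K]
    {t₁ t₂ u₁ u₂ : K} (ht₁ : t₁ ≠ 0) (ht₂ : t₂ ≠ 0) (hu₁ : u₁ ≠ 0) (hu₂ : u₂ ≠ 0)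
    (hsum : t₁ + t₂ = u₁ + u₂) (hinv : t₁⁻¹ + t₂⁻¹ = u₁⁻¹ + u₂⁻¹) :
    (u₁ = t₁ ∧ u₂ = t₂) ∨ (u₁ = t₂ ∧ u₂ = t₁) ∨ (t₂ = -t₁ ∧ u₂ = -u₁) := by
  by_cases hσ : t₁ + t₂ = 0
  · exact Or.inr (Or.inr ⟨by linear_combination hσ, by linear_combination hsum.symm.trans hσ⟩)
  have hprod : u₁ * u₂ = t₁ * t₂ := by
    field_simp at hinv
    refine mul_left_cancel₀ hσ ?_
    linear_combination hinv - t₁ * t₂ * hsum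
  have hroots : (u₁ - t₁) * (u₁ - t₂) = 0 := by
    linear_combination -hprod - u₁ * hsum
  rcases mul_eq_zero.mp hroots with h | h
  · exact Or.inl ⟨by linear_combination h, by linear_combination -hsum - h⟩
  · exact Or.inr (Or.inl ⟨by linear_combination h, by linear_combination -hsum - h⟩)

lemma sq_le_six_mul_pow_seven {q M κ : ℝ} (hq : 2 ≤ q) (hM : 0 ≤ M)
    (herror : (q * M) ^ 2 ≤ κ ^ 2 * q ^ 4 * M) (hκ : (q - 1) * κ ^ 4 ≤ 3 * q ^ 4) :
    M ^ 2 ≤ 6 * q ^ 7 := by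
  rcases hM.eq_or_lt with rfl | hMpos
  · rw [zero_pow two_ne_zero]
    exact mul_nonneg (by norm_num) (pow_nonneg (by linarith) 7)
  have hMκ : M ≤ κ ^ 2 * q ^ 2 :=
    le_of_mul_le_mul_left (a := q ^ 2 * M) (by linear_combination herror) (by positivity)
  have hκ' : q * κ ^ 4 ≤ 6 * q ^ 4 := by nlinarith [sq_nonneg (κ ^ 2)]
  calc M ^ 2 ≤ (κ ^ 2 * q ^ 2) ^ 2 := pow_le_pow_left₀ hM hMκ 2
    _ = q ^ 3 * (q * κ ^ 4) := by ring
    _ ≤ q ^ 3 * (6 * q ^ 4) := by gcongr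
    _ = 6 * q ^ 7 := by ring

section FiniteField

variable {F : Type*} [Field F] [Fintype F] {ψ : AddChar F ℂ} {ι : Type*}

/-- Points are indexed by a family rather than a set so that multiplicities are kept, as the
fourth moment of Kloosterman sums requires. -/
def fourierSum (ψ : AddChar F ℂ) (s : Finset ι) (v : ι → F × F) (ξ : F × F) : ℂ :=
  ∑ i ∈ s, ψ (ξ.1 * (v i).1 + ξ.2 * (v i).2)

lemma fourierSum_mul_conj_fourierSum {ι' : Type*} (s : Finset ι) (v : ι → F × F) (s' : Finset ι')
    (v' : ι' → F × F) (ξ : F × F) :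
    fourierSum ψ s v ξ * conj (fourierSum ψ s' v' ξ) =
      ∑ p ∈ s ×ˢ s', ψ (ξ.1 * (v p.1 - v' p.2).1 + ξ.2 * (v p.1 - v' p.2).2) := by
  rw [fourierSum, fourierSum, map_sum, sum_mul_sum, sum_product]
  refine sum_congr rfl fun i _ => sum_congr rfl fun j _ => ?_
  rw [← AddChar.map_neg_eq_conj, ← AddChar.map_add_eq_mul]
  congr 1
  simp only [Prod.fst_sub, Prod.snd_sub]
  ring

variable [DecidableEq F]

lemma sum_apply_dot_eq_ite (hψ : ψ.IsPrimitive) (w : F × F) :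
    ∑ ξ : F × F, ψ (ξ.1 * w.1 + ξ.2 * w.2) =
      if w = 0 then (Fintype.card F : ℂ) ^ 2 else 0 := by
  simp_rw [AddChar.map_add_eq_mul, Fintype.sum_prod_type, ← Finset.sum_mul_sum,
    AddChar.sum_mulShift _ hψ]
  obtain ⟨w₁, w₂⟩ := w
  by_cases h₁ : w₁ = 0 <;> by_cases h₂ : w₂ = 0 <;> simp [h₁, h₂, sq]

lemma sum_norm_sq_fourierSum (hψ : ψ.IsPrimitive) (s : Finset ι) (v : ι → F × F) :
    ∑ ξ : F × F, ‖fourierSum ψ s v ξ‖ ^ 2 =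
      (Fintype.card F : ℝ) ^ 2 * #{p ∈ s ×ˢ s | v p.1 = v p.2} := by
  have h : ∑ ξ : F × F, fourierSum ψ s v ξ * conj (fourierSum ψ s v ξ) =
      (Fintype.card F : ℂ) ^ 2 * #{p ∈ s ×ˢ s | v p.1 = v p.2} := by
    simp_rw [fourierSum_mul_conj_fourierSum]
    rw [sum_comm]
    simp_rw [sum_apply_dot_eq_ite hψ, sub_eq_zero]
    rw [← sum_filter, sum_const, nsmul_eq_mul, mul_comm]
  simp_rw [Complex.mul_conj'] at h
  exact_mod_cast h

lemma sum_norm_sq_fourierSum_id (hψ : ψ.IsPrimitive) (s : Finset (F × F)) :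
    ∑ ξ : F × F, ‖fourierSum ψ s id ξ‖ ^ 2 = (Fintype.card F : ℝ) ^ 2 * #s := by
  rw [sum_norm_sq_fourierSum hψ]
  simp only [id, ← diag_eq_filter, diag_card]

lemma norm_sum_fourierSum_mul_conj_mul_sq_le (hψ : ψ.IsPrimitive)
    (A B : Finset (F × F)) (K : F × F → ℂ) {κ : ℝ} (hK : ∀ ξ, ‖K ξ‖ ≤ κ) :
    ‖∑ ξ : F × F, fourierSum ψ A id ξ * conj (fourierSum ψ B id ξ) * K ξ‖ ^ 2 ≤
      κ ^ 2 * (Fintype.card F : ℝ) ^ 4 * (#A * #B) := by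
  have hκ : 0 ≤ κ := (norm_nonneg _).trans (hK 0)
  have htriangle : ‖∑ ξ : F × F, fourierSum ψ A id ξ * conj (fourierSum ψ B id ξ) * K ξ‖ ≤
      κ * ∑ ξ : F × F, ‖fourierSum ψ A id ξ‖ * ‖fourierSum ψ B id ξ‖ := by
    rw [mul_sum]
    refine (norm_sum_le _ _).trans (sum_le_sum fun ξ _ => ?_)
    rw [norm_mul, norm_mul, Complex.norm_conj, mul_comm κ]
    gcongr
    exact hK ξ
  have hcs := sum_mul_sq_le_sq_mul_sq univ (fun ξ => ‖fourierSum ψ A id ξ‖)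
    (fun ξ => ‖fourierSum ψ B id ξ‖)
  rw [sum_norm_sq_fourierSum_id hψ, sum_norm_sq_fourierSum_id hψ] at hcs
  calc _ ≤ (κ * ∑ ξ : F × F, ‖fourierSum ψ A id ξ‖ * ‖fourierSum ψ B id ξ‖) ^ 2 :=
        pow_le_pow_left₀ (norm_nonneg _) htriangle 2
    _ ≤ κ ^ 2 * ((Fintype.card F : ℝ) ^ 2 * #A * ((Fintype.card F : ℝ) ^ 2 * #B)) := by
        rw [mul_pow]
        gcongr
    _ = κ ^ 2 * (Fintype.card F : ℝ) ^ 4 * (#A * #B) := by ring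

def kloosterman (ψ : AddChar F ℂ) (a b : F) : ℂ :=
  ∑ t ∈ univ.erase 0, ψ (a * t + b * t⁻¹)

lemma kloosterman_mul_mul_inv (a b : F) {c : F} (hc : c ≠ 0) :
    kloosterman ψ (c * a) (b * c⁻¹) = kloosterman ψ a b := by
  refine sum_equiv (Equiv.mulLeft₀ c hc) (by simp [hc]) fun t _ => ?_
  simp only [Equiv.mulLeft₀_apply, mul_inv]
  congr 1
  field_simp

lemma kloosterman_sq (a b : F) :
    kloosterman ψ a b ^ 2 = fourierSum ψ (univ.erase 0 ×ˢ univ.erase 0)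
      (fun t => (t.1 + t.2, t.1⁻¹ + t.2⁻¹)) (a, b) := by
  rw [sq, kloosterman, sum_mul_sum, ← sum_product', fourierSum]
  refine sum_congr rfl fun t _ => ?_
  rw [← AddChar.map_add_eq_mul]
  ring_nf

lemma card_filter_add_eq_add_inv_add_eq_le :
    #{p ∈ (univ.erase (0 : F) ×ˢ univ.erase 0) ×ˢ (univ.erase 0 ×ˢ univ.erase 0) |
      (p.1.1 + p.1.2, p.1.1⁻¹ + p.1.2⁻¹) = (p.2.1 + p.2.2, p.2.1⁻¹ + p.2.2⁻¹)} ≤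
      3 * Fintype.card F ^ 2 := by
  let diagonal : F × F → (F × F) × (F × F) := fun t => (t, t)
  let antidiagonal : F × F → (F × F) × (F × F) := fun t => (t, t.swap)
  let opposite : F × F → (F × F) × (F × F) := fun x => ((x.1, -x.1), (x.2, -x.2))
  calc _ ≤ #(image diagonal univ ∪ image antidiagonal univ ∪ image opposite univ) := by
        refine card_le_card fun ⟨⟨t₁, t₂⟩, u₁, u₂⟩ hp => ?_
        simp only [mem_filter, mem_product, mem_erase, mem_univ, and_true, Prod.mk.injEq] at hp
        obtain ⟨⟨⟨ht₁, ht₂⟩, hu₁, hu₂⟩, hsum, hinv⟩ := hp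
        rcases eq_or_eq_swap_or_add_eq_zero_of_add_eq_add_of_inv_add_inv_eq ht₁ ht₂ hu₁ hu₂
          hsum hinv with ⟨rfl, rfl⟩ | ⟨rfl, rfl⟩ | ⟨rfl, rfl⟩
        · simp [diagonal]
        · simp [antidiagonal]
        · simp [opposite]
    _ ≤ #(image diagonal univ) + #(image antidiagonal univ) + #(image opposite univ) :=
        (card_union_le _ _).trans (by gcongr; exact card_union_le _ _)
    _ ≤ Fintype.card (F × F) + Fintype.card (F × F) + Fintype.card (F × F) := by
        gcongr <;> exact card_image_le
    _ = 3 * Fintype.card F ^ 2 := by rw [Fintype.card_prod]; ring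

lemma sum_norm_kloosterman_pow_four_le (hψ : ψ.IsPrimitive) :
    ∑ ξ : F × F, ‖kloosterman ψ ξ.1 ξ.2‖ ^ 4 ≤ 3 * (Fintype.card F : ℝ) ^ 4 := by
  calc ∑ ξ : F × F, ‖kloosterman ψ ξ.1 ξ.2‖ ^ 4
      = ∑ ξ : F × F, ‖fourierSum ψ (univ.erase 0 ×ˢ univ.erase 0)
          (fun t => (t.1 + t.2, t.1⁻¹ + t.2⁻¹)) ξ‖ ^ 2 := by
        refine sum_congr rfl fun ξ _ => ?_
        rw [← kloosterman_sq, norm_pow, ← pow_mul]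
    _ = (Fintype.card F : ℝ) ^ 2 *
          #{p ∈ (univ.erase (0 : F) ×ˢ univ.erase 0) ×ˢ (univ.erase 0 ×ˢ univ.erase 0) |
            (p.1.1 + p.1.2, p.1.1⁻¹ + p.1.2⁻¹) = (p.2.1 + p.2.2, p.2.1⁻¹ + p.2.2⁻¹)} :=
        sum_norm_sq_fourierSum hψ _ _
    _ ≤ (Fintype.card F : ℝ) ^ 2 * (3 * Fintype.card F ^ 2) := by
        gcongr
        exact_mod_cast card_filter_add_eq_add_inv_add_eq_le
    _ = 3 * (Fintype.card F : ℝ) ^ 4 := by ring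

lemma sub_one_mul_norm_kloosterman_pow_four_le (hψ : ψ.IsPrimitive) {a : F} (ha : a ≠ 0)
    (b : F) : ((Fintype.card F : ℝ) - 1) * ‖kloosterman ψ a b‖ ^ 4 ≤
      3 * (Fintype.card F : ℝ) ^ 4 := by
  have hinj : Set.InjOn (fun c : F => (c * a, b * c⁻¹)) (univ.erase 0 : Finset F) :=
    fun c _ d _ h => mul_right_cancel₀ ha (congrArg Prod.fst h)
  calc ((Fintype.card F : ℝ) - 1) * ‖kloosterman ψ a b‖ ^ 4
      = ∑ c ∈ univ.erase (0 : F), ‖kloosterman ψ a b‖ ^ 4 := by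
        rw [sum_const, card_erase_of_mem (mem_univ _), card_univ, nsmul_eq_mul,
          Nat.cast_sub Fintype.card_pos, Nat.cast_one]
    _ = ∑ c ∈ univ.erase (0 : F), ‖kloosterman ψ (c * a) (b * c⁻¹)‖ ^ 4 :=
        sum_congr rfl fun c hc => by rw [kloosterman_mul_mul_inv a b (ne_of_mem_erase hc)]
    _ = ∑ ξ ∈ (univ.erase 0).image (fun c : F => (c * a, b * c⁻¹)),
          ‖kloosterman ψ ξ.1 ξ.2‖ ^ 4 := by
        rw [sum_image hinj]
    _ ≤ ∑ ξ : F × F, ‖kloosterman ψ ξ.1 ξ.2‖ ^ 4 :=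
        sum_le_sum_of_subset_of_nonneg (subset_univ _) fun _ _ _ => by positivity
    _ ≤ 3 * (Fintype.card F : ℝ) ^ 4 := sum_norm_kloosterman_pow_four_le hψ

lemma sum_apply_dot_add_mul_mul_inv (hψ : ψ.IsPrimitive) {t : F} (ht : t ≠ 0) (z : F × F) :
    ∑ ξ : F × F, ψ (ξ.1 * z.1 + ξ.2 * z.2 + ξ.1 * ξ.2 * t⁻¹) =
      Fintype.card F * ψ (-(t * z.1 * z.2)) := by
  have hsplit : ∀ ξ₂ ξ₁ : F, ψ (ξ₁ * z.1 + ξ₂ * z.2 + ξ₁ * ξ₂ * t⁻¹) =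
      ψ (ξ₂ * z.2) * ψ (ξ₁ * (z.1 + ξ₂ * t⁻¹)) := by
    intro ξ₂ ξ₁
    rw [← AddChar.map_add_eq_mul]
    congr 1
    ring
  have hvanish : ∀ ξ₂ : F, z.1 + ξ₂ * t⁻¹ = 0 ↔ -(t * z.1) = ξ₂ := by
    intro ξ₂
    constructor <;> intro h
    · field_simp at h
      linear_combination -h
    · rw [← h]
      field_simp
      ring
  simp_rw [Fintype.sum_prod_type_right, hsplit, ← mul_sum, AddChar.sum_mulShift _ hψ, hvanish,
    Nat.cast_ite, Nat.cast_zero, mul_ite, mul_zero, sum_ite_eq, mem_univ, if_true]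
  rw [mul_comm, neg_mul]

lemma card_mul_card_filter_mul_sub_eq (hψ : ψ.IsPrimitive) (A B : Finset (F × F)) (lam : F) :
    (Fintype.card F : ℂ) * #{p ∈ A ×ˢ B | (p.1.1 - p.2.1) * (p.1.2 - p.2.2) = lam} =
      #A * #B + (Fintype.card F : ℂ)⁻¹ * ∑ ξ : F × F,
        fourierSum ψ A id ξ * conj (fourierSum ψ B id ξ) * kloosterman ψ lam (ξ.1 * ξ.2) := by
  have hq : (Fintype.card F : ℂ) ≠ 0 := Nat.cast_ne_zero.mpr Fintype.card_ne_zero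
  have hdetect : ∀ z : F × F, ∑ t : F, ψ (t * (lam - z.1 * z.2)) =
      if z.1 * z.2 = lam then (Fintype.card F : ℂ) else 0 := by
    intro z
    simp_rw [AddChar.sum_mulShift _ hψ, sub_eq_zero, eq_comm (a := lam)]
    split_ifs <;> simp
  have hnonzero : ∀ z : F × F, ∀ t ∈ univ.erase (0 : F), ψ (t * (lam - z.1 * z.2)) =
      (Fintype.card F : ℂ)⁻¹ * ∑ ξ : F × F,
        ψ (ξ.1 * z.1 + ξ.2 * z.2) * ψ (lam * t + ξ.1 * ξ.2 * t⁻¹) := by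
    intro z t ht
    have hsplit : ∀ ξ : F × F, ψ (ξ.1 * z.1 + ξ.2 * z.2) * ψ (lam * t + ξ.1 * ξ.2 * t⁻¹) =
        ψ (lam * t) * ψ (ξ.1 * z.1 + ξ.2 * z.2 + ξ.1 * ξ.2 * t⁻¹) := by
      intro ξ
      rw [← AddChar.map_add_eq_mul, ← AddChar.map_add_eq_mul]
      congr 1
      ring
    rw [sum_congr rfl fun ξ _ => hsplit ξ, ← mul_sum,
      sum_apply_dot_add_mul_mul_inv hψ (ne_of_mem_erase ht), mul_left_comm,
      inv_mul_cancel_left₀ hq, ← AddChar.map_add_eq_mul]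
    congr 1
    ring
  calc (Fintype.card F : ℂ) * #{p ∈ A ×ˢ B | (p.1.1 - p.2.1) * (p.1.2 - p.2.2) = lam}
      = ∑ p ∈ A ×ˢ B, ∑ t : F, ψ (t * (lam - (p.1 - p.2).1 * (p.1 - p.2).2)) := by
        simp_rw [hdetect, Prod.fst_sub, Prod.snd_sub]
        rw [← sum_filter, sum_const, nsmul_eq_mul, mul_comm]
    _ = ∑ p ∈ A ×ˢ B, (1 + ∑ t ∈ univ.erase 0,
          ψ (t * (lam - (p.1 - p.2).1 * (p.1 - p.2).2))) := by
        refine sum_congr rfl fun p _ => ?_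
        rw [← add_sum_erase _ _ (mem_univ 0), zero_mul, AddChar.map_zero_eq_one]
    _ = #A * #B + (Fintype.card F : ℂ)⁻¹ * ∑ ξ : F × F,
          (∑ p ∈ A ×ˢ B, ψ (ξ.1 * (p.1 - p.2).1 + ξ.2 * (p.1 - p.2).2)) *
            kloosterman ψ lam (ξ.1 * ξ.2) := by
        rw [sum_add_distrib, sum_const, card_product, nsmul_one, Nat.cast_mul]
        congr 1
        rw [sum_congr rfl fun p _ => sum_congr rfl fun t ht => hnonzero _ t ht]
        simp_rw [kloosterman, mul_sum, sum_mul, mul_sum]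
        exact (sum_congr rfl fun _ _ => sum_comm).trans
          (sum_comm.trans (sum_congr rfl fun _ _ => sum_comm))
    _ = _ := by simp_rw [fourierSum_mul_conj_fourierSum]; rfl

theorem exists_mem_mem_mul_sub_eq {A B : Finset (F × F)}
    (hcard : 6 * Fintype.card F ^ 7 < (#A * #B) ^ 2) {lam : F} (hlam : lam ≠ 0) :
    ∃ a ∈ A, ∃ b ∈ B, (a.1 - b.1) * (a.2 - b.2) = lam := by
  set ψ := AddChar.FiniteField.primitiveChar_to_Complex F
  have hψ : ψ.IsPrimitive := AddChar.FiniteField.primitiveChar_to_Complex_isPrimitive F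
  obtain ⟨s₀, hs₀⟩ := Finite.exists_max fun s => ‖kloosterman ψ lam s‖
  by_contra! hne
  have hempty : #{p ∈ A ×ˢ B | (p.1.1 - p.2.1) * (p.1.2 - p.2.2) = lam} = 0 :=
    card_eq_zero.2 <| filter_eq_empty_iff.2 fun p hp =>
      hne _ (mem_product.1 hp).1 _ (mem_product.1 hp).2
  have hid := card_mul_card_filter_mul_sub_eq hψ A B lam
  rw [hempty, Nat.cast_zero, mul_zero] at hid
  have hq : (Fintype.card F : ℂ) ≠ 0 := Nat.cast_ne_zero.mpr Fintype.card_ne_zero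
  have hsum : ∑ ξ : F × F, fourierSum ψ A id ξ * conj (fourierSum ψ B id ξ) *
      kloosterman ψ lam (ξ.1 * ξ.2) = -((Fintype.card F * (#A * #B) : ℕ) : ℂ) := by
    push_cast
    field_simp at hid
    linear_combination -hid
  have herror := norm_sum_fourierSum_mul_conj_mul_sq_le hψ A B _ fun ξ => hs₀ (ξ.1 * ξ.2)
  rw [hsum, norm_neg, Complex.norm_natCast] at herror
  have hkloosterman := sub_one_mul_norm_kloosterman_pow_four_le hψ hlam s₀
  have htwo : (2 : ℝ) ≤ Fintype.card F := by exact_mod_cast Fintype.one_lt_card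
  have hcard' : (6 * Fintype.card F ^ 7 : ℝ) < (#A * #B) ^ 2 := by exact_mod_cast hcard
  push_cast at herror
  linarith [sq_le_six_mul_pow_seven htwo (by positivity) herror hkloosterman]

end FiniteField

lemma six_mul_pow_seven_lt_sq {q M : ℝ} (hq : 1 ≤ q) (hM : 16 * q ^ ((15 : ℝ) / 4) ≤ M) :
    6 * q ^ 7 < M ^ 2 := by
  have hpow : q ^ 7 ≤ (q ^ ((15 : ℝ) / 4)) ^ 2 := by
    rw [← Real.rpow_natCast _ 2, ← Real.rpow_mul (by linarith), ← Real.rpow_natCast q 7]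
    exact Real.rpow_le_rpow_of_exponent_le hq (by norm_num)
  calc 6 * q ^ 7 < 256 * q ^ 7 := by linarith [pow_pos (by linarith : 0 < q) 7]
    _ ≤ 256 * (q ^ ((15 : ℝ) / 4)) ^ 2 := by gcongr
    _ = (16 * q ^ ((15 : ℝ) / 4)) ^ 2 := by ring
    _ ≤ M ^ 2 := pow_le_pow_left₀ (by positivity) hM 2

theorem stmt6 (q : ℕ) (hq : q.Prime) (𝒜 ℬ : Finset (ZMod q × ZMod q))
    (hcard : 16 * (q : ℝ) ^ ((15 : ℝ) / 4) ≤ (𝒜.card : ℝ) * (ℬ.card : ℝ)) :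
    ∀ lam : ZMod q, lam ≠ 0 →
      ∃ a ∈ 𝒜, ∃ b ∈ ℬ, (a.1 - b.1) * (a.2 - b.2) = lam := by
  have : Fact q.Prime := ⟨hq⟩
  intro lam hlam
  refine exists_mem_mem_mul_sub_eq ?_ hlam
  rw [ZMod.card]
  exact_mod_cast six_mul_pow_seven_lt_sq (by exact_mod_cast hq.one_lt.le) hcard
end

section
/- Let q be a positive integer and let 𝒜 ⊆ Z_q × Z_q be a set. Let G ⊆ SL_2(Z_q) be the set of matrices of the form [[−α, αβ+1], [−1, β]] with (α, β) ∈ 𝒜. Then the multiplicative energy of G, namely the number of quadruples (g_1, g_2, g_3, g_4) ∈ G⁴ with g_1·g_2^{-1} = g_3·g_4^{-1}, is at most τ(q)·q·|𝒜|². -/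
/-!
For `g = [[-α, αβ + 1], [-1, β]]`, the first column of `g₁ g₂⁻¹` is `(α₁(β₁ - β₂) + 1, β₁ - β₂)`,
so `g₁ g₂⁻¹ = g₃ g₄⁻¹` forces `(α₁ - α₃)(β₁ - β₂) = 0`; moreover `g₄ = g₂ g₁⁻¹ g₃`. Hence the energy
is at most the number of triples in `𝒜³` satisfying this relation, and for fixed second and third
entries the first one is pinned down by a solution of `xy = 0` in `ℤ_q²`. There are at most
`τ(q) q` such solutions: if `xy = 0` then `q = ef` with `e ∣ x`, `f ∣ y`, and `ℤ_q` contains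
`q / e` multiples of `e` and `e` multiples of `f`.
-/

instance (q : ℕ) : DecidableEq (Matrix.SpecialLinearGroup (Fin 2) (ZMod q)) :=
  fun a b => decidable_of_iff ((a : Matrix (Fin 2) (Fin 2) (ZMod q)) = b) Subtype.coe_inj

open Finset Matrix
open scoped MatrixGroups

section Energy

variable {M : Type*} [Group M] [DecidableEq M]

def mulInvEnergy (G : Finset M) : ℕ :=
  #{x ∈ (G ×ˢ G) ×ˢ (G ×ˢ G) | x.1.1 * x.1.2⁻¹ = x.2.1 * x.2.2⁻¹}

theorem mulInvEnergy_image_le {α : Type*} (f : α → M) (A : Finset α)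
    (r : α → α → α → Prop) [∀ a b c, Decidable (r a b c)]
    (hr : ∀ a₁ a₂ a₃ a₄, f a₁ * (f a₂)⁻¹ = f a₃ * (f a₄)⁻¹ → r a₁ a₂ a₃) :
    mulInvEnergy (A.image f) ≤ #{t ∈ A ×ˢ A ×ˢ A | r t.1 t.2.1 t.2.2} := by
  refine (card_le_card ?_).trans (card_image_le (f := fun t : α × α × α =>
    ((f t.1, f t.2.1), (f t.2.2, f t.2.1 * (f t.1)⁻¹ * f t.2.2))))
  rintro ⟨⟨g₁, g₂⟩, g₃, g₄⟩ hg
  simp only [mem_filter, mem_product, mem_image] at hg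
  obtain ⟨⟨⟨⟨a₁, ha₁, rfl⟩, ⟨a₂, ha₂, rfl⟩⟩, ⟨a₃, ha₃, rfl⟩, ⟨a₄, -, rfl⟩⟩, heq⟩ := hg
  refine mem_image.2 ⟨(a₁, a₂, a₃), mem_filter.2 ⟨by simp [ha₁, ha₂, ha₃], hr _ _ _ _ heq⟩, ?_⟩
  have hg₄ : f a₄ = f a₂ * (f a₁)⁻¹ * f a₃ :=
    calc f a₄ = (f a₃ * (f a₄)⁻¹)⁻¹ * f a₃ := by group
      _ = f a₂ * (f a₁)⁻¹ * f a₃ := by rw [← heq]; group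
  simp [hg₄]

end Energy

section Param

variable {R : Type*} [CommRing R]

def sl2Param (p : R × R) : SL(2, R) :=
  ⟨!![-p.1, p.1 * p.2 + 1; -1, p.2], by rw [det_fin_two_of]; ring⟩

theorem coe_sl2Param (p : R × R) :
    (sl2Param p : Matrix (Fin 2) (Fin 2) R) = !![-p.1, p.1 * p.2 + 1; -1, p.2] := rfl

theorem sub_mul_sub_eq_zero_of_sl2Param_mul_inv_eq {p₁ p₂ p₃ p₄ : R × R}
    (h : sl2Param p₁ * (sl2Param p₂)⁻¹ = sl2Param p₃ * (sl2Param p₄)⁻¹) :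
    (p₁.1 - p₃.1) * (p₁.2 - p₂.2) = 0 := by
  have hM := congrArg (fun g : SL(2, R) => (g : Matrix (Fin 2) (Fin 2) R)) h
  simp only [Matrix.SpecialLinearGroup.coe_mul, Matrix.SpecialLinearGroup.coe_inv, coe_sl2Param,
    adjugate_fin_two_of, mul_fin_two] at hM
  have h₀₀ := congrFun (congrFun hM 0) 0
  have h₁₀ := congrFun (congrFun hM 1) 0
  simp only [of_apply, cons_val', cons_val_zero, cons_val_one, cons_val_fin_one] at h₀₀ h₁₀
  linear_combination h₀₀ - p₃.1 * h₁₀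

end Param

theorem card_filter_sub_mul_sub_eq_zero_le {R : Type*} [Ring R] [Fintype R] [DecidableEq R]
    (A : Finset (R × R)) :
    #{t ∈ A ×ˢ A ×ˢ A | (t.1.1 - t.2.2.1) * (t.1.2 - t.2.1.2) = 0}
      ≤ #{p : R × R | p.1 * p.2 = 0} * #A ^ 2 := by
  rw [sq, ← card_product]
  refine card_le_mul_card_image_of_maps_to (f := Prod.snd)
    (fun t ht => (mem_product.1 (mem_filter.1 ht).1).2) _ fun c _ => ?_
  refine card_le_card_of_injOn (fun t => (t.1.1 - c.2.1, t.1.2 - c.1.2)) ?_ ?_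
  · intro t ht
    obtain ⟨htA, rfl⟩ := mem_filter.1 ht
    simp only [coe_filter, mem_univ, true_and, Set.mem_ofPred_eq]
    exact (mem_filter.1 htA).2
  · intro t ht t' ht' h
    obtain ⟨-, rfl⟩ := mem_filter.1 ht
    obtain ⟨-, hc⟩ := mem_filter.1 ht'
    simp only [Prod.mk.injEq, sub_left_inj, ← hc] at h
    exact Prod.ext (Prod.ext h.1 h.2) hc.symm

namespace ZMod

variable {q : ℕ} [NeZero q]

theorem exists_dvd_val_of_mul_eq_zero {x y : ZMod q} (h : x * y = 0) :
    ∃ e ∈ q.divisors, e ∣ x.val ∧ q / e ∣ y.val := by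
  have : q ∣ x.val * y.val := by
    rw [← natCast_eq_zero_iff, Nat.cast_mul, natCast_zmod_val, natCast_zmod_val, h]
  obtain ⟨e, f, hex, hfy, rfl⟩ := dvd_mul.1 this
  have he : e ≠ 0 := left_ne_zero_of_mul (NeZero.ne (e * f))
  exact ⟨e, Nat.mem_divisors.2 ⟨dvd_mul_right e f, NeZero.ne _⟩, hex, by
    rwa [Nat.mul_div_cancel_left _ (Nat.pos_of_ne_zero he)]⟩

theorem card_filter_dvd_val_le {e : ℕ} (he : e ∣ q) : #{x : ZMod q | e ∣ x.val} ≤ q / e := by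
  rw [← card_range (q / e)]
  refine card_le_card_of_injOn (fun x => x.val / e) (fun x _ => ?_) fun x hx y hy hxy => ?_
  · exact mem_range.2 (Nat.div_lt_div_of_lt_of_dvd he (val_lt x))
  · simp only [coe_filter, mem_univ, true_and, Set.mem_ofPred_eq] at hx hy
    exact val_injective _ ((Nat.div_left_inj hx hy).1 hxy)

theorem card_filter_mul_eq_zero_le :
    #{p : ZMod q × ZMod q | p.1 * p.2 = 0} ≤ q.divisors.card * q := by
  set D : ℕ → Finset (ZMod q) := fun e => {x | e ∣ x.val}
  calc #{p : ZMod q × ZMod q | p.1 * p.2 = 0}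
      ≤ #(q.divisors.biUnion fun e => D e ×ˢ D (q / e)) := by
        refine card_le_card fun p hp => ?_
        obtain ⟨e, he, hx, hy⟩ := exists_dvd_val_of_mul_eq_zero (mem_filter.1 hp).2
        exact mem_biUnion.2 ⟨e, he, by simp [D, hx, hy]⟩
    _ ≤ ∑ e ∈ q.divisors, #(D e ×ˢ D (q / e)) := card_biUnion_le
    _ ≤ ∑ _e ∈ q.divisors, q := sum_le_sum fun e he => by
        have he : e ∣ q := Nat.dvd_of_mem_divisors he
        calc _ ≤ q / e * (q / (q / e)) := by
              rw [card_product]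
              exact Nat.mul_le_mul (card_filter_dvd_val_le he)
                (card_filter_dvd_val_le (Nat.div_dvd_of_dvd he))
          _ = q := by rw [Nat.div_div_self he (NeZero.ne q), Nat.div_mul_cancel he]
    _ = q.divisors.card * q := by rw [sum_const, smul_eq_mul]

end ZMod

theorem stmt11 (q : ℕ) (hq : 0 < q) (𝒜 : Finset (ZMod q × ZMod q))
    (G : Finset (Matrix.SpecialLinearGroup (Fin 2) (ZMod q)))
    (hG : ∀ g : Matrix.SpecialLinearGroup (Fin 2) (ZMod q),
      g ∈ G ↔ ∃ p ∈ 𝒜,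
        (g : Matrix (Fin 2) (Fin 2) (ZMod q)) = !![-p.1, p.1 * p.2 + 1; -1, p.2]) :
    (((G ×ˢ G) ×ˢ (G ×ˢ G)).filter
        (fun x => x.1.1 * x.1.2⁻¹ = x.2.1 * x.2.2⁻¹)).card
      ≤ q.divisors.card * q * 𝒜.card ^ 2 := by
  have : NeZero q := ⟨hq.ne'⟩
  obtain rfl : G = 𝒜.image sl2Param := by
    ext g
    simp only [hG, mem_image, ← coe_sl2Param]
    exact exists_congr fun p => and_congr_right fun _ => eq_comm.trans Subtype.coe_inj
  calc mulInvEnergy (𝒜.image sl2Param)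
      ≤ #{t ∈ 𝒜 ×ˢ 𝒜 ×ˢ 𝒜 | (t.1.1 - t.2.2.1) * (t.1.2 - t.2.1.2) = 0} :=
        mulInvEnergy_image_le _ _ _ fun _ _ _ _ => sub_mul_sub_eq_zero_of_sl2Param_mul_inv_eq
    _ ≤ #{p : ZMod q × ZMod q | p.1 * p.2 = 0} * #𝒜 ^ 2 := card_filter_sub_mul_sub_eq_zero_le 𝒜
    _ ≤ q.divisors.card * q * #𝒜 ^ 2 := Nat.mul_le_mul_right _ ZMod.card_filter_mul_eq_zero_le
end

section
/- Let R be a finite ring and S ⊆ R a set, and let k = cov^+(S) be the additive covering number of S, i.e., the least size of a set X ⊆ R with S + X = R. Suppose that for every integer j with 1 ≤ j ≤ k, the image of j in R is a unit. Then cov^×(S−S) ≤ k, i.e., there exists a set Y ⊆ R with |Y| ≤ k and Y·(S−S) = R. -/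
/-!
Fix a cover `S + X = R` with `|X| = k` and any `a : R`. Each of the `k + 1` elements
`0 • a, 1 • a, …, k • a` lies in some translate `S + x` with `x ∈ X`, so by pigeonhole two of them,
`j • a` and `j' • a` with `j < j'`, share a translate; then `(j' - j) • a ∈ S - S`.
Since `d = j' - j ∈ [1, k]` is a unit of `R`, this gives `a ∈ d⁻¹ * (S - S)`, so
`Y = {j⁻¹ : 1 ≤ j ≤ k}` works.
-/

open Pointwise

theorem Finset.exists_nsmul_mem_sub_of_nsmul_mem_add {G : Type*} [AddGroup G] [DecidableEq G]
    {S X : Finset G} {a : G} (h : ∀ j ≤ X.card, j • a ∈ S + X) :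
    ∃ d ∈ Finset.Icc 1 X.card, d • a ∈ S - S := by
  have hdecomp : ∀ j : Fin (X.card + 1), ∃ s ∈ S, ∃ x ∈ X, s + x = (j : ℕ) • a :=
    fun j => Finset.mem_add.mp (h j (Nat.lt_succ_iff.mp j.isLt))
  choose s hs x hx hsx using hdecomp
  obtain ⟨i, -, i', -, hne, hxx⟩ := Finset.exists_ne_map_eq_of_card_lt_of_maps_to
    (s := Finset.univ) (by simp) (fun j _ => hx j)
  wlog hlt : i < i' generalizing i i'
  · exact this i' i hne.symm hxx.symm (lt_of_le_of_ne (not_lt.mp hlt) hne.symm)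
  refine ⟨i' - i, Finset.mem_Icc.mpr ⟨by omega, by omega⟩, ?_⟩
  have hdiff : ((i' : ℕ) - i) • a = s i' - s i := by
    rw [sub_nsmul a (le_of_lt hlt), ← sub_eq_add_neg, ← hsx, ← hsx, hxx,
      add_sub_add_right_eq_sub]
  exact hdiff ▸ Finset.sub_mem_sub (hs i') (hs i)

theorem stmt12 (R : Type*) [Ring R] [Fintype R] [DecidableEq R]
    (S : Finset R) (k : ℕ)
    (hk : IsLeast {n : ℕ | ∃ X : Finset R, X.card = n ∧ S + X = Finset.univ} k)
    (hunit : ∀ j : ℕ, 1 ≤ j → j ≤ k → IsUnit (j : R)) :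
    ∃ Y : Finset R, Y.card ≤ k ∧ Y * (S - S) = Finset.univ := by
  obtain ⟨⟨X, rfl, hcover⟩, -⟩ := hk
  refine ⟨(Finset.Icc 1 X.card).image fun j : ℕ => Ring.inverse (j : R),
    Finset.card_image_le.trans (by simp), Finset.eq_univ_iff_forall.mpr fun a => ?_⟩
  obtain ⟨d, hd, hda⟩ := Finset.exists_nsmul_mem_sub_of_nsmul_mem_add (a := a)
    fun j _ => hcover ▸ Finset.mem_univ (j • a)
  obtain ⟨hd1, hdk⟩ := Finset.mem_Icc.mp hd
  have ha : a = Ring.inverse (d : R) * (d • a) := by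
    rw [nsmul_eq_mul, ← mul_assoc, Ring.inverse_mul_cancel _ (hunit d hd1 hdk), one_mul]
  exact ha ▸ Finset.mul_mem_mul (Finset.mem_image_of_mem _ hd) hda
end

section
/- Let R be a finite ring and A ⊆ R a set with |A| = α|R|, α > 0. Suppose that for every integer j with 1 ≤ j ≤ ⌊α^{-1}⌋, the image of j in R is a unit. Then cov^×(2A − 2A) ≤ α^{-1}, i.e., there exists a set Y ⊆ R with |Y| ≤ α^{-1} and Y·(A + A − A − A) = R. -/
/-!
Let `m = ⌊α⁻¹⌋`. For `r ∈ R`, the `m + 1` translates `j • r + A`, `0 ≤ j ≤ m`, have total size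
`(m + 1)|A| > α⁻¹|A| = |R|`, so two of them meet: `j • r + a = k • r + b` with `j < k`. Then
`(k - j) r = a - b ∈ A - A ⊆ 2A - 2A`, and since `1 ≤ k - j ≤ m` the element `k - j` is a unit, so
`r = (k - j)⁻¹ (a - b)`. Hence `Y = {j⁻¹ : 1 ≤ j ≤ m}` works.
-/

open Pointwise Finset

section AddGroup

variable {G : Type*} [AddGroup G]

theorem Finset.sub_subset_add_sub_sub [DecidableEq G] {A : Finset G} {a₀ : G} (ha₀ : a₀ ∈ A) :
    A - A ⊆ A + A - A - A := by
  intro x hx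
  obtain ⟨a, ha, b, hb, rfl⟩ := mem_sub.1 hx
  rw [← add_sub_cancel_right a a₀]
  exact sub_mem_sub (sub_mem_sub (add_mem_add ha ha₀) ha₀) hb

theorem nsmul_sub_eq_sub_of_add_eq {r a b : G} {j k : ℕ} (hjk : j ≤ k)
    (h : j • r + a = k • r + b) : (k - j) • r = a - b := by
  rw [← Nat.add_sub_cancel' hjk, add_nsmul, add_assoc] at h
  exact eq_sub_of_add_eq (add_left_cancel h).symm

theorem Finset.exists_nsmul_mem_sub_of_card_lt [Fintype G] [DecidableEq G] (A : Finset G)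
    (r : G) {n : ℕ} (h : Fintype.card G < (n + 1) * #A) : ∃ d ∈ Icc 1 n, d • r ∈ A - A := by
  have of_lt : ∀ {j k a b}, j < k → k ≤ n → a ∈ A → b ∈ A → j • r + a = k • r + b →
      ∃ d ∈ Icc 1 n, d • r ∈ A - A := fun {j k a b} hjk hk ha hb h ↦
    ⟨k - j, mem_Icc.2 ⟨by omega, by omega⟩,
      by rw [nsmul_sub_eq_sub_of_add_eq hjk.le h]; exact sub_mem_sub ha hb⟩
  have hcard : #(univ : Finset G) < #(range (n + 1) ×ˢ A) := by simpa [card_product] using h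
  obtain ⟨⟨j, a⟩, hja, ⟨k, b⟩, hkb, hne, heq⟩ :=
    exists_ne_map_eq_of_card_lt_of_maps_to (f := fun p : ℕ × G ↦ p.1 • r + p.2) hcard
      (fun _ _ ↦ mem_coe.2 (mem_univ _))
  simp only [mem_product, mem_range, Order.lt_add_one_iff] at hja hkb
  rcases lt_trichotomy j k with hjk | rfl | hkj
  · exact of_lt hjk hkb.1 hja.2 hkb.2 heq
  · exact (hne (Prod.ext rfl (add_left_cancel heq))).elim
  · exact of_lt hkj hja.1 hkb.2 hja.2 heq.symm

end AddGroup

theorem Finset.image_inverse_Icc_mul_sub_eq_univ {R : Type*} [Ring R] [Fintype R] [DecidableEq R]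
    (A : Finset R) {n : ℕ} (hunit : ∀ j ∈ Icc 1 n, IsUnit (j : R))
    (h : Fintype.card R < (n + 1) * #A) :
    (Icc 1 n).image (fun j : ℕ ↦ Ring.inverse (j : R)) * (A - A) = univ := by
  refine eq_univ_iff_forall.2 fun r ↦ ?_
  obtain ⟨d, hd, hdr⟩ := exists_nsmul_mem_sub_of_card_lt A r h
  rw [nsmul_eq_mul] at hdr
  have hr : Ring.inverse (d : R) * (d * r) = r := by
    rw [← mul_assoc, Ring.inverse_mul_cancel _ (hunit d hd), one_mul]
  exact hr ▸ mul_mem_mul (mem_image_of_mem _ hd) hdr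

theorem stmt13 (R : Type*) [Ring R] [Fintype R] [DecidableEq R]
    (A : Finset R) (α : ℝ) (hA : (A.card : ℝ) = α * Fintype.card R) (hα : 0 < α)
    (hunit : ∀ j : ℕ, 1 ≤ j → j ≤ ⌊α⁻¹⌋₊ → IsUnit (j : R)) :
    ∃ Y : Finset R, (Y.card : ℝ) ≤ α⁻¹ ∧ Y * (A + A - A - A) = Finset.univ := by
  set m := ⌊α⁻¹⌋₊
  have hR : (0 : ℝ) < Fintype.card R := by exact_mod_cast Fintype.card_pos
  have hA_pos : (0 : ℝ) < #A := by rw [hA]; positivity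
  have hcard : Fintype.card R < (m + 1) * #A := by
    have hRA : (Fintype.card R : ℝ) = α⁻¹ * #A := by rw [hA]; field_simp
    exact_mod_cast hRA ▸ mul_lt_mul_of_pos_right (Nat.lt_floor_add_one α⁻¹) hA_pos
  obtain ⟨a₀, ha₀⟩ := card_pos.1 (by exact_mod_cast hA_pos)
  refine ⟨(Icc 1 m).image (fun j : ℕ ↦ Ring.inverse (j : R)), ?_, ?_⟩
  · calc (#((Icc 1 m).image (fun j : ℕ ↦ Ring.inverse (j : R))) : ℝ)
        ≤ #(Icc 1 m) := by exact_mod_cast card_image_le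
      _ = m := by simp
      _ ≤ α⁻¹ := Nat.floor_le (by positivity)
  · rw [← univ_subset_iff, ← image_inverse_Icc_mul_sub_eq_univ A
      (fun j hj ↦ hunit j (mem_Icc.1 hj).1 (mem_Icc.1 hj).2) hcard]
    exact mul_subset_mul_left (sub_subset_add_sub_sub ha₀)
end

section
/- Let q be a positive integer and A ⊆ Z_q a set with |A| = αq, α > 0. Suppose that the least prime factor of q is greater than 2α^{-1} + 3. Then there exists a positive integer k* with k* ≤ α^{-1} + 1 such that for every g ∈ Z_q there exist an integer j with 1 ≤ j ≤ k* and elements a, a' ∈ A satisfying j·g = a − a' in Z_q (note that each such j is invertible modulo q, so g lies in j^{-1}·(A−A)). -/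
/-- Pigeonhole: the translates `A + i • g`, `0 ≤ i ≤ k`, cannot be pairwise disjoint, and an
overlap `a + i • g = a' + i' • g` with `i < i'` gives `(i' - i) • g = a - a'`. -/
theorem exists_nsmul_eq_sub_of_card_lt {G : Type*} [AddCommGroup G] [Fintype G]
    (A : Finset G) (g : G) {k : ℕ} (hcard : Fintype.card G < (k + 1) * A.card) :
    ∃ j : ℕ, 1 ≤ j ∧ j ≤ k ∧ ∃ a ∈ A, ∃ a' ∈ A, j • g = a - a' := by
  have hlt : (Finset.univ : Finset G).card < (Finset.range (k + 1) ×ˢ A).card := by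
    rwa [Finset.card_product, Finset.card_range, Finset.card_univ]
  obtain ⟨⟨i, a⟩, hia, ⟨i', a'⟩, hia', hne, heq⟩ :=
    Finset.exists_ne_map_eq_of_card_lt_of_maps_to hlt
      (f := fun p : ℕ × G => p.2 + p.1 • g) (fun _ _ => Finset.mem_univ _)
  simp only [Finset.mem_product, Finset.mem_range] at hia hia' heq
  wlog hii' : i < i' generalizing i a i' a'
  · rcases (not_lt.mp hii').lt_or_eq with h | rfl
    · exact this i' a' i a hne.symm heq.symm hia' hia h
    · exact absurd (by rw [add_right_cancel heq]) hne
  refine ⟨i' - i, by omega, by omega, a, hia.2, a', hia'.2, ?_⟩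
  rw [sub_nsmul g hii'.le]
  linear_combination (norm := abel_nf) -heq

theorem card_lt_ceil_inv_add_one_mul {q : ℕ} {A : Finset (ZMod q)} {α : ℝ}
    (hA : (A.card : ℝ) = α * q) (hα : 0 < α) (hq : 0 < q) :
    q < (⌈α⁻¹⌉₊ + 1) * A.card := by
  have hA_pos : (0 : ℝ) < A.card := by rw [hA]; positivity
  have : (q : ℝ) < (⌈α⁻¹⌉₊ + 1) * A.card :=
    calc (q : ℝ) = α⁻¹ * A.card := by rw [hA, inv_mul_cancel_left₀ hα.ne']
      _ ≤ ⌈α⁻¹⌉₊ * A.card := by gcongr; exact Nat.le_ceil _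
      _ < (⌈α⁻¹⌉₊ + 1) * A.card := by gcongr; linarith
  exact_mod_cast this

theorem stmt16_general (q : ℕ) (hq : 0 < q) (A : Finset (ZMod q)) (α : ℝ)
    (hA : (A.card : ℝ) = α * q) (hα : 0 < α) :
    ∃ kstar : ℕ, 0 < kstar ∧ (kstar : ℝ) ≤ α⁻¹ + 1 ∧
      ∀ g : ZMod q, ∃ j : ℕ, 1 ≤ j ∧ j ≤ kstar ∧
        ∃ a ∈ A, ∃ a' ∈ A, (j : ZMod q) * g = a - a' := by
  have : NeZero q := ⟨hq.ne'⟩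
  refine ⟨⌈α⁻¹⌉₊, Nat.ceil_pos.mpr (inv_pos.mpr hα), (Nat.ceil_lt_add_one (inv_pos.mpr hα).le).le,
    fun g => ?_⟩
  have hcard : Fintype.card (ZMod q) < (⌈α⁻¹⌉₊ + 1) * A.card := by
    rw [ZMod.card]; exact card_lt_ceil_inv_add_one_mul hA hα hq
  simpa only [nsmul_eq_mul] using exists_nsmul_eq_sub_of_card_lt A g hcard

theorem stmt16 (q : ℕ) (hq : 0 < q) (A : Finset (ZMod q)) (α : ℝ)
    (hA : (A.card : ℝ) = α * q) (hα : 0 < α)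
    (hmin : 2 * α⁻¹ + 3 < (q.minFac : ℝ)) :
    ∃ kstar : ℕ, 0 < kstar ∧ (kstar : ℝ) ≤ α⁻¹ + 1 ∧
      ∀ g : ZMod q, ∃ j : ℕ, 1 ≤ j ∧ j ≤ kstar ∧
        ∃ a ∈ A, ∃ a' ∈ A, (j : ZMod q) * g = a - a' :=
  stmt16_general q hq A α hA hα
end
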